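/- For all i, n ≥ 0, the number of occurrences of the letter n in the word W_i equals the binomial coefficient C(i - n + ⌊n/2⌋, ⌊n/2⌋), where the upper entry i - n + ⌊n/2⌋ is computed in the integers and C(x, y) is defined to be 0 whenever x < y or x < 0. -/

import Mathlib

/-!
Every letter of `w.flatMap phi` comes from a letter of `w`: `0` only from `0`, `2k+1` only from `2k`, and
`2k+2` from `2k+2` and from `2k+1`. So `W (i+1)` has as many letters `2k+1` as `W i` has
letters `2k`, and the counts `e i k` of the even letters `2k` satisfy
`e (i+2) (k+1) = e (i+1) (k+1) + e i k`, the recurrence of the diagonals `C(i-k, k)` of Pascal's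
triangle.
-/

/-- The morphism `phi` on the alphabet `ℕ`: `phi (2i) = (2i)(2i+1)` and `phi (2i+1) = (2i+2)`. -/
def phi (a : ℕ) : List ℕ := if a % 2 = 0 then [a, a + 1] else [a + 1]

/-- The finite ZWW words: `W n = phi^n(0)`, so `W 0 = 0`, `W 1 = 01`, `W 2 = 012`, `W 3 = 01223`. -/
def W (n : ℕ) : List ℕ := (fun w => w.flatMap phi)^[n] [0]

theorem W_succ (i : ℕ) : W (i + 1) = (W i).flatMap phi :=
  Function.iterate_succ_apply' _ _ _

theorem count_phi (a n : ℕ) :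
    (phi a).count n = (if a % 2 = 0 ∧ a = n then 1 else 0) + if a + 1 = n then 1 else 0 := by
  unfold phi
  split_ifs <;> grind

theorem count_flatMap_phi_zero (w : List ℕ) : (w.flatMap phi).count 0 = w.count 0 := by
  induction w with
  | nil => rfl
  | cons a w ih =>
    rw [List.flatMap_cons, List.count_append, ih, count_phi, List.count_cons]
    split_ifs <;> grind

theorem count_flatMap_phi_odd (w : List ℕ) (k : ℕ) :
    (w.flatMap phi).count (2 * k + 1) = w.count (2 * k) := by
  induction w with
  | nil => rfl
  | cons a w ih =>
    rw [List.flatMap_cons, List.count_append, ih, count_phi, List.count_cons]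
    split_ifs <;> grind

theorem count_flatMap_phi_even_succ (w : List ℕ) (k : ℕ) :
    (w.flatMap phi).count (2 * (k + 1)) = w.count (2 * (k + 1)) + w.count (2 * k + 1) := by
  induction w with
  | nil => rfl
  | cons a w ih =>
    rw [List.flatMap_cons, List.count_append, ih, count_phi, List.count_cons, List.count_cons]
    split_ifs <;> grind

theorem Nat.choose_succ_sub_succ (j k : ℕ) :
    (j + 1 - k).choose (k + 1) = (j - k).choose k + (j - k).choose (k + 1) := by
  rcases le_or_gt k j with h | h
  · rw [Nat.sub_add_comm h, Nat.choose_succ_succ']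
  · rw [Nat.sub_eq_zero_of_le h, Nat.sub_eq_zero_of_le h.le,
      Nat.choose_eq_zero_of_lt (Nat.zero_lt_of_lt h), Nat.choose_zero_succ]

theorem count_W_succ_odd (i k : ℕ) : (W (i + 1)).count (2 * k + 1) = (W i).count (2 * k) := by
  rw [W_succ, count_flatMap_phi_odd]

theorem count_W_even (i k : ℕ) : (W i).count (2 * k) = (i - k).choose k := by
  induction i using Nat.twoStepInduction generalizing k with
  | zero => cases k <;> simp [W]
  | one =>
    rcases k with _ | _ | k <;> simp [W, phi, List.count_cons]
    omega
  | more j ih₀ ih₁ =>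
    cases k with
    | zero => simpa [W_succ, count_flatMap_phi_zero] using ih₀ 0
    | succ k =>
      rw [W_succ, count_flatMap_phi_even_succ, ih₁, count_W_succ_odd, ih₀,
        show j + 2 - (k + 1) = j + 1 - k by omega, Nat.choose_succ_sub_succ,
        Nat.add_sub_add_right, add_comm]

theorem ite_lt_zero_toNat_choose (x : ℤ) (k : ℕ) (h : 0 < k ∨ 0 ≤ x) :
    (if x < 0 then 0 else x.toNat.choose k) = x.toNat.choose k := by
  split_ifs with hx
  · rw [Int.toNat_of_nonpos hx.le, Nat.choose_eq_zero_of_lt (by omega)]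
  · rfl

/-- The number of occurrences of the letter `n` in `W i` equals the binomial coefficient
`C(i - n + ⌊n/2⌋, ⌊n/2⌋)`, where the upper entry is computed in `ℤ` and
`C(x, y) = 0` whenever `x < y` or `x < 0`. -/
theorem zww_letter_count : ∀ i n : ℕ,
    (W i).count n =
      if (i : ℤ) - (n : ℤ) + ((n / 2 : ℕ) : ℤ) < 0 then 0
      else ((i : ℤ) - (n : ℤ) + ((n / 2 : ℕ) : ℤ)).toNat.choose (n / 2) := by
  intro i n
  obtain ⟨k, rfl | rfl⟩ := Nat.even_or_odd' n
  · have hk : 2 * k / 2 = k := by omega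
    rw [ite_lt_zero_toNat_choose _ _ (by omega), count_W_even, hk]
    congr 1
    omega
  · have hk : (2 * k + 1) / 2 = k := by omega
    rcases i with _ | i
    · rw [if_pos (by omega)]
      simp [W]
    · rw [ite_lt_zero_toNat_choose _ _ (by omega), count_W_succ_odd, count_W_even, hk]
      congr 1
      omega
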